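/- The function $u(x,t) = \mathrm{sech}\left(x - \frac{1}{2} t\right)$ is a solution of the Rosenau equation $u_t + u_x + u_{xxxxt} + (g(u))_x = 0$ with $g(u) = -10u^3 + 12u^5$. -/

import Mathlib

/-!
For a traveling wave `u x t = φ (x - c t)` every term of the Rosenau operator is a derivative
in the single variable `s = x - c t`, and the whole operator is the derivative of the profile
expression `(1 - c) φ - c φ'''' + g ∘ φ`. For `φ = sech` one has
`sech'''' = sech - 20 sech³ + 24 sech⁵` (from `sech' = -sech tanh`, `tanh' = sech²` and
`tanh² = 1 - sech²`), so with `c = 1/2` and `g v = -10 v³ + 12 v⁵` the profile expression vanishes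
identically.
-/

open Real

namespace Real

noncomputable def sech (y : ℝ) : ℝ := (cosh y)⁻¹

lemma tanh_sq_eq_one_sub_sech_sq (y : ℝ) : tanh y ^ 2 = 1 - sech y ^ 2 := by
  have := (cosh_pos y).ne'
  rw [tanh_eq_sinh_div_cosh, sech]
  field_simp
  linear_combination -cosh_sq y

lemma contDiff_sech {n : WithTop ℕ∞} : ContDiff ℝ n sech :=
  contDiff_cosh.inv fun y => (cosh_pos y).ne'

lemma hasDerivAt_sech (y : ℝ) : HasDerivAt sech (-sech y * tanh y) y := by
  refine ((hasDerivAt_cosh y).inv (cosh_pos y).ne').congr_deriv ?_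
  rw [sech, tanh_eq_sinh_div_cosh]
  ring

lemma hasDerivAt_tanh (y : ℝ) : HasDerivAt tanh (sech y ^ 2) y := by
  have := (cosh_pos y).ne'
  have h : tanh = fun y => sinh y / cosh y := funext tanh_eq_sinh_div_cosh
  rw [h]
  refine ((hasDerivAt_sinh y).div (hasDerivAt_cosh y) this).congr_deriv ?_
  rw [sech]
  field_simp
  linear_combination cosh_sq y

lemma hasDerivAt_sech_pow (n : ℕ) (y : ℝ) :
    HasDerivAt (fun y => sech y ^ n) (-n * sech y ^ n * tanh y) y := by
  refine ((hasDerivAt_sech y).pow n).congr_deriv ?_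
  rcases n with _ | n
  · simp
  · simp only [Nat.add_sub_cancel, Nat.cast_add, Nat.cast_one]
    ring

lemma hasDerivAt_sech_pow_mul_tanh (n : ℕ) (y : ℝ) :
    HasDerivAt (fun y => sech y ^ n * tanh y)
      ((n + 1) * sech y ^ (n + 2) - n * sech y ^ n) y := by
  refine ((hasDerivAt_sech_pow n y).mul (hasDerivAt_tanh y)).congr_deriv ?_
  linear_combination (-(n : ℝ) * sech y ^ n) * tanh_sq_eq_one_sub_sech_sq y

lemma iteratedDeriv_four_sech :
    iteratedDeriv 4 sech = fun y => sech y - 20 * sech y ^ 3 + 24 * sech y ^ 5 := by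
  have d1 : deriv sech = fun y => -(sech y ^ 1 * tanh y) := funext fun y =>
    (hasDerivAt_sech y).deriv.trans (by ring)
  have d2 : deriv (fun y => -(sech y ^ 1 * tanh y)) = fun y => sech y ^ 1 - 2 * sech y ^ 3 :=
    funext fun y => (hasDerivAt_sech_pow_mul_tanh 1 y).neg.deriv.trans (by push_cast; ring)
  have d3 : deriv (fun y => sech y ^ 1 - 2 * sech y ^ 3)
      = fun y => 6 * (sech y ^ 3 * tanh y) - sech y ^ 1 * tanh y :=
    funext fun y => ((hasDerivAt_sech_pow 1 y).sub
      ((hasDerivAt_sech_pow 3 y).const_mul 2)).deriv.trans (by push_cast; ring)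
  have d4 : deriv (fun y => 6 * (sech y ^ 3 * tanh y) - sech y ^ 1 * tanh y)
      = fun y => sech y - 20 * sech y ^ 3 + 24 * sech y ^ 5 :=
    funext fun y => (((hasDerivAt_sech_pow_mul_tanh 3 y).const_mul 6).sub
      (hasDerivAt_sech_pow_mul_tanh 1 y)).deriv.trans (by push_cast; ring)
  rw [iteratedDeriv_eq_iterate]
  simp only [Function.iterate_succ, Function.iterate_zero, Function.comp_apply, id]
  rw [d1, d2, d3, d4]

end Real

lemma deriv_comp_const_sub_mul {f : ℝ → ℝ} {x c t : ℝ} (hf : DifferentiableAt ℝ f (x - c * t)) :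
    deriv (fun t' => f (x - c * t')) t = -c * deriv f (x - c * t) := by
  have h := hf.hasDerivAt.comp t (((hasDerivAt_id t).const_mul c).const_sub x)
  simpa [mul_comm, Function.comp_def] using h.deriv

lemma deriv_rosenau_travelingWave {φ g : ℝ → ℝ} (hφ : ContDiff ℝ 5 φ) (hg : Differentiable ℝ g)
    (c x t : ℝ) :
    deriv (fun t' => φ (x - c * t')) t + deriv (fun x' => φ (x' - c * t)) x
      + deriv (fun t' => iteratedDeriv 4 (fun x' => φ (x' - c * t')) x) t
      + deriv (fun x' => g (φ (x' - c * t))) x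
    = deriv (fun s => (1 - c) * φ s - c * iteratedDeriv 4 φ s + g (φ s)) (x - c * t) := by
  have hφ' : Differentiable ℝ φ := hφ.differentiable (by norm_num)
  have hφ4 : Differentiable ℝ (iteratedDeriv 4 φ) := hφ.differentiable_iteratedDeriv 4 (by norm_num)
  have hgφ : ∀ s, HasDerivAt (fun s => g (φ s)) (deriv g (φ s) * deriv φ s) s := fun s =>
    (hg (φ s)).hasDerivAt.comp s (hφ' s).hasDerivAt
  simp only [iteratedDeriv_comp_sub_const 4 φ, deriv_comp_sub_const (f := φ),
    deriv_comp_sub_const (f := fun s => g (φ s)), deriv_comp_const_sub_mul (hφ' _),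
    deriv_comp_const_sub_mul (hφ4 _)]
  have hF : HasDerivAt (fun s => (1 - c) * φ s - c * iteratedDeriv 4 φ s + g (φ s))
      ((1 - c) * deriv φ (x - c * t) - c * deriv (iteratedDeriv 4 φ) (x - c * t)
        + deriv g (φ (x - c * t)) * deriv φ (x - c * t)) (x - c * t) :=
    (((hφ' _).hasDerivAt.const_mul (1 - c)).sub ((hφ4 _).hasDerivAt.const_mul c)).add (hgφ _)
  rw [hF.deriv, (hgφ _).deriv]
  ring

/-- The solitary wave `u(x,t) = sech(x - t/2)` solves the Rosenau equation
`u_t + u_x + u_{xxxxt} + (g(u))_x = 0` with `g(u) = -10u³ + 12u⁵`. -/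
theorem stmt_18 (u : ℝ → ℝ → ℝ)
    (hu : ∀ x t : ℝ, u x t = 1 / Real.cosh (x - (1 / 2) * t)) :
    ∀ x t : ℝ,
      deriv (fun t' => u x t') t + deriv (fun x' => u x' t) x
        + deriv (fun t' => iteratedDeriv 4 (fun x' => u x' t') x) t
        + deriv (fun x' => -10 * u x' t ^ 3 + 12 * u x' t ^ 5) x = 0 := by
  obtain rfl : u = fun x t => sech (x - 1 / 2 * t) :=
    funext₂ fun x t => (hu x t).trans (one_div _)
  intro x t
  have profile : (fun s => (1 - 1 / 2) * sech s - 1 / 2 * iteratedDeriv 4 sech s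
      + (-10 * sech s ^ 3 + 12 * sech s ^ 5)) = fun _ => 0 := by
    funext s
    rw [iteratedDeriv_four_sech]
    ring
  have g_diff : Differentiable ℝ fun v : ℝ => -10 * v ^ 3 + 12 * v ^ 5 := by fun_prop
  rw [deriv_rosenau_travelingWave contDiff_sech g_diff, profile, deriv_const]
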